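/- arXiv:1609.05347 — 8 statements merged into one kernel-verified Lean document; each statement's English description precedes it below -/
import Mathlib

section
/- Let $G$ be a finite connected simple graph with a vertex partition $V(G) = C_1 \cup C_2$ such that every vertex in $C_1$ has exactly $c_{11}$ neighbors in $C_1$ and $c_{12}$ neighbors in $C_2$, and every vertex in $C_2$ has exactly $c_{21}$ neighbors in $C_1$ and $c_{22}$ neighbors in $C_2$. Then for every vertex $v$ of $G$, $\sum_{u \in N(v)} d(u) = (c_{11}+c_{22}) d(v) + (c_{12}c_{21} - c_{11}c_{22})$. -/
theorem two_equitable_implies_condition {V : Type*} [Fintype V] [DecidableEq V]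
    (G : SimpleGraph V) [DecidableRel G.Adj] (hconn : G.Connected)
    (C1 C2 : Finset V) (hcover : ∀ v : V, v ∈ C1 ∨ v ∈ C2) (hdisj : Disjoint C1 C2)
    (c11 c12 c21 c22 : ℕ)
    (h1 : ∀ v ∈ C1, (G.neighborFinset v ∩ C1).card = c11 ∧ (G.neighborFinset v ∩ C2).card = c12)
    (h2 : ∀ v ∈ C2, (G.neighborFinset v ∩ C1).card = c21 ∧ (G.neighborFinset v ∩ C2).card = c22) :
    ∀ v : V, ∑ u ∈ G.neighborFinset v, (G.degree u : ℤ) =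
      ((c11 : ℤ) + c22) * G.degree v + ((c12 : ℤ) * c21 - (c11 : ℤ) * c22) := by
  have hdisj' : ∀ u : V, Disjoint (G.neighborFinset u ∩ C1) (G.neighborFinset u ∩ C2) :=
    fun u => (hdisj.mono (Finset.inter_subset_right) (Finset.inter_subset_right))
  have hsplit : ∀ u : V, G.neighborFinset u =
      (G.neighborFinset u ∩ C1) ∪ (G.neighborFinset u ∩ C2) := by
    intro u
    ext w
    simp only [Finset.mem_union, Finset.mem_inter]
    constructor
    · intro hw; rcases hcover w with h | h
      · exact Or.inl ⟨hw, h⟩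
      · exact Or.inr ⟨hw, h⟩
    · rintro (⟨h, _⟩ | ⟨h, _⟩) <;> exact h
  have hdeg : ∀ u : V, G.degree u =
      (G.neighborFinset u ∩ C1).card + (G.neighborFinset u ∩ C2).card := by
    intro u
    rw [← Finset.card_union_of_disjoint (hdisj' u), ← hsplit u, SimpleGraph.card_neighborFinset_eq_degree]
  have hdeg1 : ∀ u ∈ C1, (G.degree u : ℤ) = (c11 : ℤ) + c12 := by
    intro u hu
    obtain ⟨ha, hb⟩ := h1 u hu
    rw [hdeg u, ha, hb]; push_cast; ring
  have hdeg2 : ∀ u ∈ C2, (G.degree u : ℤ) = (c21 : ℤ) + c22 := by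
    intro u hu
    obtain ⟨ha, hb⟩ := h2 u hu
    rw [hdeg u, ha, hb]; push_cast; ring
  intro v
  have key : ∑ u ∈ G.neighborFinset v, (G.degree u : ℤ) =
      ((G.neighborFinset v ∩ C1).card : ℤ) * ((c11 : ℤ) + c12) +
      ((G.neighborFinset v ∩ C2).card : ℤ) * ((c21 : ℤ) + c22) := by
    conv_lhs => rw [hsplit v]
    rw [Finset.sum_union (hdisj' v)]
    congr 1
    · rw [Finset.sum_congr rfl (fun u hu => hdeg1 u (Finset.mem_inter.mp hu).2),
        Finset.sum_const, nsmul_eq_mul]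
    · rw [Finset.sum_congr rfl (fun u hu => hdeg2 u (Finset.mem_inter.mp hu).2),
        Finset.sum_const, nsmul_eq_mul]
  rcases hcover v with hv | hv
  · obtain ⟨ha, hb⟩ := h1 v hv
    rw [key, ha, hb, hdeg v, ha, hb]; push_cast; ring
  · obtain ⟨ha, hb⟩ := h2 v hv
    rw [key, ha, hb, hdeg v, ha, hb]; push_cast; ring
end

section
/- Let $G$ be a finite simple graph with minimum degree $\delta$ satisfying $\sum_{x \in N(v)} d(x) = a\,d(v) + b$ for all vertices $v$, where $a, b$ are reals with $a \geq \delta$. Then for every vertex $u$, $d(u)^2 - (a^2 - a\delta + \delta + b)\,d(u) - (a-\delta)b \leq 0$. -/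
theorem degree_quadratic_bound {V : Type*} [Fintype V] [Nonempty V] (G : SimpleGraph V)
    [DecidableRel G.Adj] (a b : ℝ) (ha : (G.minDegree : ℝ) ≤ a)
    (h : ∀ v : V, ∑ x ∈ G.neighborFinset v, (G.degree x : ℝ) = a * G.degree v + b) :
    ∀ u : V, (G.degree u : ℝ) ^ 2
        - (a ^ 2 - a * G.minDegree + G.minDegree + b) * G.degree u
        - (a - G.minDegree) * b ≤ 0 := by
  intro u
  by_cases hu : G.degree u = 0
  · have hempty : G.neighborFinset u = ∅ := by
      rw [← Finset.card_eq_zero, G.card_neighborFinset_eq_degree, hu]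
    have hb : b = 0 := by
      have hh := h u
      rw [hempty, hu] at hh
      simpa using hh.symm
    have hδ : G.minDegree = 0 := Nat.le_zero.mp (hu ▸ G.minDegree_le_degree u)
    rw [hu, hδ, hb]
    norm_num
  · classical
    set δ : ℝ := (G.minDegree : ℝ) with hδdef
    have key : ∀ x ∈ G.neighborFinset u,
        (G.degree u : ℝ) ≤ (a - δ) * G.degree x + b + δ := by
      intro x hx
      have hux : u ∈ G.neighborFinset x := by
        rw [SimpleGraph.mem_neighborFinset] at hx ⊢
        exact hx.symm
      have hcard : ((G.neighborFinset x).erase u).card = G.degree x - 1 := by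
        rw [Finset.card_erase_of_mem hux, G.card_neighborFinset_eq_degree]
      have hdx1 : 1 ≤ G.degree x := by
        have := Finset.card_pos.mpr ⟨u, hux⟩
        rwa [G.card_neighborFinset_eq_degree] at this
      have hlow : ∀ y ∈ (G.neighborFinset x).erase u, δ ≤ (G.degree y : ℝ) := by
        intro y _
        rw [hδdef]
        exact_mod_cast G.minDegree_le_degree y
      have hsum2 : ((G.degree x : ℝ) - 1) * δ
          ≤ ∑ y ∈ (G.neighborFinset x).erase u, (G.degree y : ℝ) := by
        have := Finset.card_nsmul_le_sum _ _ _ hlow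
        rw [hcard] at this
        have hcast : ((G.degree x - 1 : ℕ) : ℝ) = (G.degree x : ℝ) - 1 := by
          push_cast [hdx1]; ring
        calc ((G.degree x : ℝ) - 1) * δ = (G.degree x - 1 : ℕ) • δ := by
              rw [nsmul_eq_mul, hcast]
          _ ≤ _ := this
      have hsum : (G.degree u : ℝ) + ((G.degree x : ℝ) - 1) * δ
          ≤ ∑ y ∈ G.neighborFinset x, (G.degree y : ℝ) := by
        rw [← Finset.add_sum_erase _ _ hux]
        linarith
      rw [h x] at hsum
      linarith
    have hmain := Finset.sum_le_sum key
    rw [Finset.sum_const, G.card_neighborFinset_eq_degree, nsmul_eq_mul] at hmain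
    have hsplit : ∑ x ∈ G.neighborFinset u, ((a - δ) * (G.degree x : ℝ) + b + δ)
        = (a - δ) * (a * G.degree u + b) + (b + δ) * G.degree u := by
      rw [Finset.sum_add_distrib, Finset.sum_add_distrib, ← Finset.mul_sum, h u,
        Finset.sum_const, Finset.sum_const, G.card_neighborFinset_eq_degree,
        nsmul_eq_mul, nsmul_eq_mul]
      ring
    rw [hsplit] at hmain
    nlinarith [hmain]
end

section
/- Let $G$ be a finite simple graph with minimum degree $\delta$ satisfying $\sum_{x \in N(v)} d(x) = a\,d(v) + b$ for all vertices $v$, with $a \geq \delta$. If a vertex $u$ satisfies $d(u)^2 - (a^2 - a\delta + \delta + b)\,d(u) - (a-\delta)b = 0$, then every vertex $x \neq u$ at distance exactly $2$ or adjacent to a neighbor of $u$ (i.e., $x \in (\cup_{v \in N(u)} N(v)) \setminus \{u\}$) has degree $\delta$. -/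
theorem equality_case_degrees {V : Type*} [Fintype V] [Nonempty V] (G : SimpleGraph V)
    [DecidableRel G.Adj] (a b : ℝ) (ha : (G.minDegree : ℝ) ≤ a)
    (h : ∀ v : V, ∑ x ∈ G.neighborFinset v, (G.degree x : ℝ) = a * G.degree v + b)
    (u : V)
    (heq : (G.degree u : ℝ) ^ 2
        - (a ^ 2 - a * G.minDegree + G.minDegree + b) * G.degree u
        - (a - G.minDegree) * b = 0) :
    ∀ x : V, x ≠ u → (∃ v : V, G.Adj u v ∧ G.Adj v x) → G.degree x = G.minDegree := by
  classical
  intro x hxu hx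
  obtain ⟨v, huv, hvx⟩ := hx
  set δ : ℝ := (G.minDegree : ℝ) with hδ
  have hdeg : ∀ w : V, δ ≤ (G.degree w : ℝ) := fun w => by
    simp only [hδ]; exact_mod_cast G.minDegree_le_degree w
  -- key : inner sums
  have key : ∀ w ∈ G.neighborFinset u,
      ∑ y ∈ (G.neighborFinset w).erase u, ((G.degree y : ℝ) - δ)
        = (a - δ) * G.degree w + (b + δ - G.degree u) := by
    intro w hw
    have hu : u ∈ G.neighborFinset w := by
      rw [SimpleGraph.mem_neighborFinset] at hw ⊢; exact hw.symm
    have h1 : ∑ y ∈ (G.neighborFinset w).erase u, (G.degree y : ℝ)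
        = a * G.degree w + b - G.degree u := by
      have h2 := Finset.sum_erase_add (G.neighborFinset w)
        (fun y => (G.degree y : ℝ)) hu
      rw [h w] at h2
      linarith
    have hcard : ((G.neighborFinset w).erase u).card = G.degree w - 1 := by
      rw [Finset.card_erase_of_mem hu, SimpleGraph.card_neighborFinset_eq_degree]
    have hpos : 1 ≤ G.degree w := by
      rw [← SimpleGraph.card_neighborFinset_eq_degree]
      exact Finset.card_pos.mpr ⟨u, hu⟩
    rw [Finset.sum_sub_distrib, h1, Finset.sum_const, hcard, nsmul_eq_mul]
    push_cast [Nat.cast_sub hpos]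
    ring
  -- total sum is zero
  have hTcongr : ∑ w ∈ G.neighborFinset u,
      ∑ y ∈ (G.neighborFinset w).erase u, ((G.degree y : ℝ) - δ)
      = ∑ w ∈ G.neighborFinset u, ((a - δ) * G.degree w + (b + δ - G.degree u)) :=
    Finset.sum_congr rfl key
  have hsum : ∑ w ∈ G.neighborFinset u,
      ((a - δ) * (G.degree w : ℝ) + (b + δ - G.degree u))
      = (a - δ) * (a * G.degree u + b) + (G.degree u : ℝ) * (b + δ - G.degree u) := by
    rw [Finset.sum_add_distrib, ← Finset.mul_sum, h u, Finset.sum_const,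
      SimpleGraph.card_neighborFinset_eq_degree, nsmul_eq_mul]
  have hT : ∑ w ∈ G.neighborFinset u,
      ∑ y ∈ (G.neighborFinset w).erase u, ((G.degree y : ℝ) - δ) = 0 := by
    rw [hTcongr, hsum]; nlinarith [heq]
  -- nonnegativity forces each term zero
  have hnn : ∀ w ∈ G.neighborFinset u,
      0 ≤ ∑ y ∈ (G.neighborFinset w).erase u, ((G.degree y : ℝ) - δ) := by
    intro w _
    exact Finset.sum_nonneg fun y _ => by linarith [hdeg y]
  have hv : v ∈ G.neighborFinset u := by rw [SimpleGraph.mem_neighborFinset]; exact huv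
  have hinner : ∑ y ∈ (G.neighborFinset v).erase u, ((G.degree y : ℝ) - δ) = 0 :=
    (Finset.sum_eq_zero_iff_of_nonneg hnn).mp hT v hv
  have hxmem : x ∈ (G.neighborFinset v).erase u := by
    rw [Finset.mem_erase, SimpleGraph.mem_neighborFinset]; exact ⟨hxu, hvx⟩
  have hterm : (G.degree x : ℝ) - δ = 0 :=
    (Finset.sum_eq_zero_iff_of_nonneg fun y _ => by linarith [hdeg y]).mp hinner x hxmem
  have : (G.degree x : ℝ) = (G.minDegree : ℝ) := by rw [hδ] at hterm; linarith
  exact_mod_cast this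
end

section
/- Let $G$ be a finite connected simple graph with minimum degree $\delta$ such that $a\delta + b = \delta^2$ and $\sum_{x \in N(v)} d(x) = a\,d(v) + b$ for all vertices $v$, where $a, b$ are reals with $a \geq 0$. Then $G$ is $\delta$-regular. -/
theorem regularity_from_min_degree {V : Type*} [Fintype V] [Nonempty V] (G : SimpleGraph V)
    [DecidableRel G.Adj] (hconn : G.Connected) (a b : ℝ) (ha : 0 ≤ a)
    (hd : a * G.minDegree + b = (G.minDegree : ℝ) ^ 2)
    (h : ∀ v : V, ∑ x ∈ G.neighborFinset v, (G.degree x : ℝ) = a * G.degree v + b) :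
    G.IsRegularOfDegree G.minDegree := by
  -- key step: min degree propagates along edges
  have key : ∀ v w : V, G.degree v = G.minDegree → G.Adj v w → G.degree w = G.minDegree := by
    intro v w hv hadj
    have hsum : ∑ x ∈ G.neighborFinset v, (G.degree x : ℝ) = (G.minDegree : ℝ) ^ 2 := by
      rw [h v, hv, hd]
    have hconst : ∑ _x ∈ G.neighborFinset v, (G.minDegree : ℝ) = (G.minDegree : ℝ) ^ 2 := by
      rw [Finset.sum_const, G.card_neighborFinset_eq_degree, hv, sq, nsmul_eq_mul]
    have hle : ∀ x ∈ G.neighborFinset v, (G.minDegree : ℝ) ≤ (G.degree x : ℝ) := by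
      intro x _
      exact_mod_cast G.minDegree_le_degree x
    have heq := (Finset.sum_eq_sum_iff_of_le hle).mp (hconst.trans hsum.symm)
    have hw : (G.minDegree : ℝ) = (G.degree w : ℝ) :=
      heq w (G.mem_neighborFinset v w |>.mpr hadj)
    exact_mod_cast hw.symm
  have main : ∀ {x y : V} (p : G.Walk x y), G.degree x = G.minDegree → G.degree y = G.minDegree := by
    intro x y p
    induction p with
    | nil => exact id
    | cons hadj _ ih => exact fun hx => ih (key _ _ hx hadj)
  obtain ⟨u, hu⟩ := G.exists_minimal_degree_vertex
  intro v
  obtain ⟨p⟩ := hconn u v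
  exact main p hu.symm
end

section
/- Let $b \geq 1$ be an integer and let $G$ be a finite connected simple graph with minimum degree $1$ satisfying $\sum_{x \in N(v)} d(x) = d(v) + b$ for all vertices $v$. Then $G$ is the double star $S_{b,b}$: it has exactly two adjacent vertices $u, w$ of degree $b+1$, and all other vertices are leaves ($b$ pendant vertices attached to each of $u$ and $w$). -/
theorem double_star_characterization {V : Type*} [Fintype V] [Nonempty V] (G : SimpleGraph V)
    [DecidableRel G.Adj] (hconn : G.Connected) (b : ℕ) (hb : 1 ≤ b)
    (hmin : G.minDegree = 1)
    (h : ∀ v : V, ∑ x ∈ G.neighborFinset v, G.degree x = G.degree v + b) :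
    ∃ u w : V, G.Adj u w ∧ G.degree u = b + 1 ∧ G.degree w = b + 1 ∧
      (∀ x : V, x ≠ u → x ≠ w → G.degree x = 1) ∧
      Fintype.card V = 2 * b + 2 := by
  classical
  have hdeg1 : ∀ x : V, 1 ≤ G.degree x := fun x => hmin ▸ G.minDegree_le_degree x
  -- leaf's neighborFinset is a singleton
  have hleafN : ∀ x y : V, G.degree x = 1 → G.Adj x y → G.neighborFinset x = {y} := by
    intro x y hx hxy
    have hcard : (G.neighborFinset x).card = 1 := by
      rw [G.card_neighborFinset_eq_degree]; exact hx
    obtain ⟨a, ha⟩ := Finset.card_eq_one.mp hcard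
    have hy : y ∈ G.neighborFinset x := (G.mem_neighborFinset x y).mpr hxy
    rw [ha] at hy ⊢
    simp at hy; rw [hy]
  -- Lemma A : neighbor of a leaf has degree b+1
  have lemA : ∀ x y : V, G.degree x = 1 → G.Adj x y → G.degree y = b + 1 := by
    intro x y hx hxy
    have hs := h x
    rw [hleafN x y hx hxy, Finset.sum_singleton, hx] at hs
    omega
  -- Lemma B : neighbor of a degree b+1 vertex has degree 1 or b+1
  have lemB : ∀ x y : V, G.degree x = b + 1 → G.Adj x y →
      G.degree y = 1 ∨ G.degree y = b + 1 := by
    intro x y hx hxy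
    by_cases h1 : G.degree y = 1
    · exact Or.inl h1
    right
    have hk : 2 ≤ G.degree y := by have := hdeg1 y; omega
    have hsum := h y
    have hxmem : x ∈ G.neighborFinset y := (G.mem_neighborFinset y x).mpr hxy.symm
    rw [← Finset.sum_erase_add _ _ hxmem, hx] at hsum
    have hcard : ((G.neighborFinset y).erase x).card = G.degree y - 1 := by
      rw [Finset.card_erase_of_mem hxmem, G.card_neighborFinset_eq_degree]
    have hall : ∀ z ∈ (G.neighborFinset y).erase x, G.degree z = 1 := by
      by_contra hcon
      push_neg at hcon
      obtain ⟨z, hz, hz1⟩ := hcon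
      have hlt : ∑ z ∈ (G.neighborFinset y).erase x, (1 : ℕ) <
          ∑ z ∈ (G.neighborFinset y).erase x, G.degree z :=
        Finset.sum_lt_sum (fun i _ => hdeg1 i) ⟨z, hz, by have := hdeg1 z; omega⟩
      rw [Finset.sum_const, smul_eq_mul, mul_one, hcard] at hlt
      omega
    obtain ⟨z, hz⟩ := Finset.card_pos.mp (show 0 < ((G.neighborFinset y).erase x).card by omega)
    have hzy : G.Adj z y := ((G.mem_neighborFinset y z).mp (Finset.mem_of_mem_erase hz)).symm
    exact lemA z y (hall z hz) hzy
  -- key : a degree b+1 vertex has exactly one neighbor of degree b+1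
  have key : ∀ a : V, G.degree a = b + 1 →
      ((G.neighborFinset a).filter (fun z => G.degree z = b + 1)).card = 1 := by
    intro a ha
    set T := (G.neighborFinset a).filter (fun z => G.degree z = b + 1) with hT
    set Tc := (G.neighborFinset a).filter (fun z => ¬ G.degree z = b + 1) with hTc
    have hsplit : ∑ z ∈ T, G.degree z + ∑ z ∈ Tc, G.degree z = G.degree a + b := by
      rw [hT, hTc, Finset.sum_filter_add_sum_filter_not]; exact h a
    have h1 : ∑ z ∈ T, G.degree z = T.card * (b + 1) := by
      rw [Finset.sum_congr rfl (fun z hz => (Finset.mem_filter.mp hz).2), Finset.sum_const,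
        smul_eq_mul]
    have h2 : ∑ z ∈ Tc, G.degree z = Tc.card := by
      rw [Finset.sum_congr rfl (fun z hz => ?_), Finset.sum_const, smul_eq_mul, mul_one]
      obtain ⟨hz1, hz2⟩ := Finset.mem_filter.mp hz
      rcases lemB a z ha ((G.mem_neighborFinset a z).mp hz1) with h' | h'
      · exact h'
      · exact absurd h' hz2
    have hcards : T.card + Tc.card = b + 1 := by
      rw [hT, hTc, Finset.card_filter_add_card_filter_not,
        G.card_neighborFinset_eq_degree, ha]
    have hexp : T.card * (b + 1) = T.card * b + T.card := by ring
    rw [h1, h2, ha, hexp] at hsplit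
    have htb : T.card * b = b := by omega
    exact Nat.eq_of_mul_eq_mul_right (show 0 < b by omega) (htb.trans (one_mul b).symm)
  -- find a leaf v, its neighbor u
  obtain ⟨v, hv⟩ := G.exists_minimal_degree_vertex
  rw [hmin] at hv
  have hv : G.degree v = 1 := hv.symm
  obtain ⟨u, hu⟩ := Finset.card_pos.mp (show 0 < (G.neighborFinset v).card by
    rw [G.card_neighborFinset_eq_degree, hv]; omega)
  have hvu : G.Adj v u := (G.mem_neighborFinset v u).mp hu
  have hdu : G.degree u = b + 1 := lemA v u hv hvu
  -- find w, the unique degree b+1 neighbor of u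
  obtain ⟨w, hw⟩ := Finset.card_eq_one.mp (key u hdu)
  have hwmem : w ∈ (G.neighborFinset u).filter (fun z => G.degree z = b + 1) := by
    rw [hw]; exact Finset.mem_singleton_self w
  obtain ⟨hwN, hdw⟩ := Finset.mem_filter.mp hwmem
  have huw : G.Adj u w := (G.mem_neighborFinset u w).mp hwN
  -- the unique degree b+1 neighbor of w is u
  obtain ⟨u', hu'⟩ := Finset.card_eq_one.mp (key w hdw)
  have humem : u ∈ (G.neighborFinset w).filter (fun z => G.degree z = b + 1) := by
    rw [Finset.mem_filter, G.mem_neighborFinset]; exact ⟨huw.symm, hdu⟩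
  have hu'u : u' = u := by
    rw [hu'] at humem
    exact (Finset.mem_singleton.mp humem).symm
  rw [hu'u] at hu'
  -- leaves attached to u and w
  have hLu : ∀ x ∈ (G.neighborFinset u).erase w, G.degree x = 1 := by
    intro x hx
    obtain ⟨hxw, hxN⟩ := Finset.mem_erase.mp hx
    rcases lemB u x hdu ((G.mem_neighborFinset u x).mp hxN) with h' | h'
    · exact h'
    · have hxin : x ∈ (G.neighborFinset u).filter (fun z => G.degree z = b + 1) :=
        Finset.mem_filter.mpr ⟨hxN, h'⟩
      rw [hw, Finset.mem_singleton] at hxin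
      exact absurd hxin hxw
  have hLw : ∀ x ∈ (G.neighborFinset w).erase u, G.degree x = 1 := by
    intro x hx
    obtain ⟨hxu, hxN⟩ := Finset.mem_erase.mp hx
    rcases lemB w x hdw ((G.mem_neighborFinset w x).mp hxN) with h' | h'
    · exact h'
    · have hxin : x ∈ (G.neighborFinset w).filter (fun z => G.degree z = b + 1) :=
        Finset.mem_filter.mpr ⟨hxN, h'⟩
      rw [hu', Finset.mem_singleton] at hxin
      exact absurd hxin hxu
  set Lu := (G.neighborFinset u).erase w with hLudef
  set Lw := (G.neighborFinset w).erase u with hLwdef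
  set S : Finset V := insert u (insert w (Lu ∪ Lw)) with hSdef
  -- S is closed under adjacency
  have hclosed : ∀ x ∈ S, ∀ y : V, G.Adj x y → y ∈ S := by
    intro x hx y hxy
    rw [hSdef, Finset.mem_insert, Finset.mem_insert, Finset.mem_union] at hx ⊢
    rcases hx with rfl | rfl | hx | hx
    · by_cases hyw : y = w
      · exact Or.inr (Or.inl hyw)
      · exact Or.inr (Or.inr (Or.inl (Finset.mem_erase.mpr ⟨hyw,
          (G.mem_neighborFinset x y).mpr hxy⟩)))
    · by_cases hyu : y = u
      · exact Or.inl hyu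
      · exact Or.inr (Or.inr (Or.inr (Finset.mem_erase.mpr ⟨hyu,
          (G.mem_neighborFinset x y).mpr hxy⟩)))
    · have hNx := hleafN x y (hLu x hx) hxy
      have hxu : G.Adj x u := (G.mem_neighborFinset u x).mp (Finset.mem_of_mem_erase hx) |>.symm
      have hy : y = u := by
        have h2 : u ∈ G.neighborFinset x := (G.mem_neighborFinset x u).mpr hxu
        rw [hNx, Finset.mem_singleton] at h2
        exact h2.symm
      exact Or.inl hy
    · have hNx := hleafN x y (hLw x hx) hxy
      have hxw : G.Adj x w := (G.mem_neighborFinset w x).mp (Finset.mem_of_mem_erase hx) |>.symm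
      have hy : y = w := by
        have h2 : w ∈ G.neighborFinset x := (G.mem_neighborFinset x w).mpr hxw
        rw [hNx, Finset.mem_singleton] at h2
        exact h2.symm
      exact Or.inr (Or.inl hy)
  -- connectivity : every vertex is in S
  have step : ∀ (a x : V) (p : G.Walk a x), a ∈ S → x ∈ S := by
    intro a x p
    induction p with
    | nil => exact id
    | cons hadj q ih => intro ha; exact ih (hclosed _ ha _ hadj)
  have hall : ∀ x : V, x ∈ S := by
    intro x
    obtain ⟨p⟩ := hconn u x
    exact step u x p (by rw [hSdef]; exact Finset.mem_insert_self u _)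
  -- disjointness facts
  have hune : u ≠ w := huw.ne
  have huLu : u ∉ Lu := by
    rw [hLudef]; intro hmem
    exact G.irrefl ((G.mem_neighborFinset u u).mp (Finset.mem_of_mem_erase hmem))
  have huLw : u ∉ Lw := by rw [hLwdef]; simp
  have hwLu : w ∉ Lu := by rw [hLudef]; simp
  have hwLw : w ∉ Lw := by
    rw [hLwdef]; intro hmem
    exact G.irrefl ((G.mem_neighborFinset w w).mp (Finset.mem_of_mem_erase hmem))
  have hdisj : Disjoint Lu Lw := by
    rw [Finset.disjoint_left]
    intro x hx1 hx2
    have hd1 := hLu x hx1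
    have hadj_u : G.Adj x u := ((G.mem_neighborFinset u x).mp (Finset.mem_of_mem_erase hx1)).symm
    have hadj_w : G.Adj x w := ((G.mem_neighborFinset w x).mp (Finset.mem_of_mem_erase hx2)).symm
    have e1 := hleafN x u hd1 hadj_u
    have e2 := hleafN x w hd1 hadj_w
    rw [e1] at e2
    exact hune (Finset.singleton_inj.mp e2)
  refine ⟨u, w, huw, hdu, hdw, ?_, ?_⟩
  · intro x hxu hxw
    have hx := hall x
    rw [hSdef, Finset.mem_insert, Finset.mem_insert, Finset.mem_union] at hx
    rcases hx with rfl | rfl | hx | hx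
    · exact absurd rfl hxu
    · exact absurd rfl hxw
    · exact hLu x hx
    · exact hLw x hx
  · have huniv : (Finset.univ : Finset V) = S := (Finset.eq_univ_of_forall hall).symm
    have hcLu : Lu.card = b := by
      rw [hLudef, Finset.card_erase_of_mem hwN, G.card_neighborFinset_eq_degree, hdu]
      omega
    have hcLw : Lw.card = b := by
      rw [hLwdef, Finset.card_erase_of_mem ((G.mem_neighborFinset w u).mpr huw.symm),
        G.card_neighborFinset_eq_degree, hdw]
      omega
    rw [← Finset.card_univ, huniv, hSdef]
    rw [Finset.card_insert_of_notMem (by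
      simp only [Finset.mem_insert, Finset.mem_union]
      push_neg
      exact ⟨hune, huLu, huLw⟩)]
    rw [Finset.card_insert_of_notMem (by
      simp only [Finset.mem_union]
      push_neg
      exact ⟨hwLu, hwLw⟩)]
    rw [Finset.card_union_of_disjoint hdisj, hcLu, hcLw]
    omega
end

section
/- Let $G$ be a finite connected simple graph satisfying $\sum_{x \in N(v)} d(x) = d(v) + b$ for all vertices $v$ (case $a = 1$) with minimum degree $\delta(G) = 2$, where $b \geq 3$ is an integer. Then the maximum degree $\Delta(G)$ satisfies $1 + b/2 \leq \Delta(G) \leq b$. -/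
theorem max_degree_bounds {V : Type*} [Fintype V] [Nonempty V] (G : SimpleGraph V)
    [DecidableRel G.Adj] (hconn : G.Connected) (b : ℕ) (hb : 3 ≤ b)
    (hmin : G.minDegree = 2)
    (h : ∀ v : V, ∑ x ∈ G.neighborFinset v, G.degree x = G.degree v + b) :
    (1 : ℝ) + (b : ℝ) / 2 ≤ G.maxDegree ∧ (G.maxDegree : ℝ) ≤ b := by
  obtain ⟨v, hv⟩ := G.exists_minimal_degree_vertex
  obtain ⟨w, hw⟩ := G.exists_maximal_degree_vertex
  have hdv : G.degree v = 2 := by rw [← hv, hmin]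
  -- lower bound: sum over 2 neighbors of v equals 2 + b, each ≤ Δ
  have hlow : 2 + b ≤ 2 * G.maxDegree := by
    have hsum : ∑ x ∈ G.neighborFinset v, G.degree x = 2 + b := by
      rw [h v, hdv]
    have hle : ∑ x ∈ G.neighborFinset v, G.degree x ≤
        ∑ _x ∈ G.neighborFinset v, G.maxDegree :=
      Finset.sum_le_sum fun x _ => G.degree_le_maxDegree x
    rw [hsum, Finset.sum_const, G.card_neighborFinset_eq_degree, hdv, smul_eq_mul] at hle
    exact hle
  -- upper bound: sum over Δ neighbors of w equals Δ + b, each ≥ 2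
  have hup : 2 * G.maxDegree ≤ G.maxDegree + b := by
    have hsum : ∑ x ∈ G.neighborFinset w, G.degree x = G.maxDegree + b := by
      rw [h w, ← hw]
    have hge : ∑ _x ∈ G.neighborFinset w, 2 ≤
        ∑ x ∈ G.neighborFinset w, G.degree x :=
      Finset.sum_le_sum fun x _ => by rw [← hmin]; exact G.minDegree_le_degree x
    rw [hsum, Finset.sum_const, G.card_neighborFinset_eq_degree, smul_eq_mul,
      mul_comm] at hge
    rw [← hw] at hge
    exact hge
  constructor
  · have : (2 + b : ℝ) ≤ 2 * G.maxDegree := by exact_mod_cast hlow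
    linarith
  · have : (2 * G.maxDegree : ℝ) ≤ G.maxDegree + b := by exact_mod_cast hup
    linarith
end

section
/- Let $G$ be a finite connected simple graph with minimum degree $2$ and maximum degree $b$ (where $b \geq 3$ is an integer) satisfying $\sum_{x \in N(v)} d(x) = d(v) + b$ for all vertices $v$. Then every vertex of $G$ has degree $2$ or $b$; every vertex of degree $b$ has all neighbors of degree $2$; and every vertex of degree $2$ has exactly one neighbor of degree $2$ and one neighbor of degree $b$. In other words, $\{v : d(v)=2\} \cup \{v : d(v)=b\}$ is a 2-equitable partition with parameters $(1,1;b,0)$. -/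
open Finset SimpleGraph

theorem structure_max_degree_b {V : Type*} [Fintype V] [Nonempty V] (G : SimpleGraph V)
    [DecidableRel G.Adj] (hconn : G.Connected) (b : ℕ) (hb : 3 ≤ b)
    (hmin : G.minDegree = 2) (hmax : G.maxDegree = b)
    (h : ∀ v : V, ∑ x ∈ G.neighborFinset v, G.degree x = G.degree v + b) :
    (∀ v : V, G.degree v = 2 ∨ G.degree v = b) ∧
    (∀ v : V, G.degree v = b →
      ((G.neighborFinset v).filter (fun u => G.degree u = 2)).card = b ∧
      ((G.neighborFinset v).filter (fun u => G.degree u = b)).card = 0) ∧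
    (∀ v : V, G.degree v = 2 →
      ((G.neighborFinset v).filter (fun u => G.degree u = 2)).card = 1 ∧
      ((G.neighborFinset v).filter (fun u => G.degree u = b)).card = 1) := by
  classical
  have hlow : ∀ v, 2 ≤ G.degree v := fun v => hmin ▸ G.minDegree_le_degree v
  -- all neighbors of a degree-b vertex have degree 2
  have all2 : ∀ v, G.degree v = b → ∀ u ∈ G.neighborFinset v, G.degree u = 2 := by
    intro v hv u hu
    by_contra hne
    have h3 : 3 ≤ G.degree u := by have := hlow u; omega
    have hsum := h v
    rw [hv] at hsum
    have h1 : G.degree u + ∑ x ∈ (G.neighborFinset v).erase u, G.degree x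
        = ∑ x ∈ G.neighborFinset v, G.degree x := by
          exact Finset.add_sum_erase (G.neighborFinset v) (fun x => G.degree x) hu
    have h2 : ((G.neighborFinset v).erase u).card * 2
        ≤ ∑ x ∈ (G.neighborFinset v).erase u, G.degree x := by
      calc ((G.neighborFinset v).erase u).card * 2
          = ∑ _x ∈ (G.neighborFinset v).erase u, 2 := by
            rw [Finset.sum_const, smul_eq_mul]
        _ ≤ _ := Finset.sum_le_sum fun x _ => hlow x
    have hcard : ((G.neighborFinset v).erase u).card = b - 1 := by
      rw [Finset.card_erase_of_mem hu, G.card_neighborFinset_eq_degree, hv]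
    omega
  -- structure of the two neighbors of a degree-2 vertex
  have pairN : ∀ v, G.degree v = 2 → ∀ x ∈ G.neighborFinset v,
      ∃ u, u ≠ x ∧ G.neighborFinset v = {x, u} ∧ G.degree x + G.degree u = 2 + b := by
    intro v hv x hx
    have hc : (G.neighborFinset v).card = 2 := by
      rw [G.card_neighborFinset_eq_degree, hv]
    obtain ⟨a, c, hac, hset⟩ := Finset.card_eq_two.mp hc
    have hsum := h v
    rw [hv, hset, Finset.sum_pair hac] at hsum
    rw [hset, Finset.mem_insert, Finset.mem_singleton] at hx
    rcases hx with rfl | rfl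
    · exact ⟨c, hac.symm, hset, hsum⟩
    · exact ⟨a, hac, by rw [hset, Finset.pair_comm], by omega⟩
  -- the invariant that propagates along edges
  have step : ∀ v u, G.Adj v u →
      (G.degree v = b ∨ (G.degree v = 2 ∧ ∃ x ∈ G.neighborFinset v, G.degree x = b)) →
      (G.degree u = b ∨ (G.degree u = 2 ∧ ∃ x ∈ G.neighborFinset u, G.degree x = b)) := by
    intro v u hadj hP
    have huv : u ∈ G.neighborFinset v := (G.mem_neighborFinset v u).mpr hadj
    have hvu : v ∈ G.neighborFinset u := (G.mem_neighborFinset u v).mpr hadj.symm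
    rcases hP with hv | ⟨hv, x, hx, hxb⟩
    · exact Or.inr ⟨all2 v hv u huv, v, hvu, hv⟩
    · by_cases hux : u = x
      · exact Or.inl (hux ▸ hxb)
      · obtain ⟨u', hu'x, hset, hsum⟩ := pairN v hv x hx
        rw [hset, Finset.mem_insert, Finset.mem_singleton] at huv
        have huu' : u = u' := huv.resolve_left hux
        subst huu'
        have hu2 : G.degree u = 2 := by omega
        obtain ⟨z, hzv, hsetu, hsumu⟩ := pairN u hu2 v hvu
        refine Or.inr ⟨hu2, z, ?_, by omega⟩
        rw [hsetu, Finset.mem_insert, Finset.mem_singleton]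
        exact Or.inr rfl
  -- propagation along walks
  have walkP : ∀ (v w : V), G.Walk v w →
      (G.degree v = b ∨ (G.degree v = 2 ∧ ∃ x ∈ G.neighborFinset v, G.degree x = b)) →
      (G.degree w = b ∨ (G.degree w = 2 ∧ ∃ x ∈ G.neighborFinset w, G.degree x = b)) := by
    intro v w p
    induction p with
    | nil => exact id
    | cons hadj _ ih => exact fun hv => ih (step _ _ hadj hv)
  obtain ⟨v0, hv0⟩ := G.exists_maximal_degree_vertex
  rw [hmax] at hv0
  have Pall : ∀ v, G.degree v = b ∨
      (G.degree v = 2 ∧ ∃ x ∈ G.neighborFinset v, G.degree x = b) := by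
    intro v
    obtain ⟨p⟩ := hconn.preconnected v0 v
    exact walkP v0 v p (Or.inl hv0.symm)
  refine ⟨?_, ?_, ?_⟩
  · intro v
    rcases Pall v with hv | ⟨hv, _⟩
    · exact Or.inr hv
    · exact Or.inl hv
  · intro v hv
    have hall := all2 v hv
    constructor
    · rw [Finset.filter_true_of_mem hall, G.card_neighborFinset_eq_degree, hv]
    · rw [Finset.filter_false_of_mem (fun u hu => by have := hall u hu; omega),
        Finset.card_empty]
  · intro v hv
    rcases Pall v with hv' | ⟨_, x, hx, hxb⟩
    · omega
    obtain ⟨u, hux, hset, hsum⟩ := pairN v hv x hx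
    have hu2 : G.degree u = 2 := by omega
    rw [hset]
    constructor
    · rw [Finset.filter_insert, if_neg (by omega), Finset.filter_singleton, if_pos hu2,
        Finset.card_singleton]
    · rw [Finset.filter_insert, if_pos hxb, Finset.filter_singleton, if_neg (by omega)]
      simp
end

section
/- Let $G$ be a finite connected simple graph satisfying $\sum_{x \in N(v)} d(x) = 2 d(v)$ for all vertices $v$ (the case $(a,b) = (2,0)$) and such that $G$ is not regular. Then $G$ is the tree $T_2$ on $7$ vertices: a root $u$ of degree $3$ whose three neighbors each have degree $2$, each of them adjacent to one additional pendant vertex. -/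
open Finset SimpleGraph

section Aux

variable {V : Type*} [Fintype V] [DecidableEq V] {G : SimpleGraph V} [DecidableRel G.Adj]

lemma aux_deg_pos (hconn : G.Connected) {a b : V} (hab : a ≠ b) (v : V) :
    1 ≤ G.degree v := by
  have hw : ∃ w, w ≠ v := by
    by_cases hav : a = v
    · exact ⟨b, fun e => hab (hav.trans e.symm)⟩
    · exact ⟨a, hav⟩
  obtain ⟨w, hwv⟩ := hw
  obtain ⟨p⟩ := hconn v w
  cases p with
  | nil => exact absurd rfl hwv
  | cons hadj q =>
      exact Nat.one_le_iff_ne_zero.mpr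
        (Nat.pos_iff_ne_zero.mp (G.degree_pos_iff_exists_adj v |>.mpr ⟨_, hadj⟩))

/-- neighbor degree bound: `d x ≤ d v + 1` for `x` adjacent to `v`. -/
lemma aux_adj_deg (hdeg : ∀ v : V, 1 ≤ G.degree v)
    (h : ∀ v : V, ∑ x ∈ G.neighborFinset v, G.degree x = 2 * G.degree v)
    {v x : V} (hvx : G.Adj v x) : G.degree x ≤ G.degree v + 1 := by
  have hx : x ∈ G.neighborFinset v := (G.mem_neighborFinset v x).mpr hvx
  have hsplit : G.degree x + ∑ y ∈ (G.neighborFinset v).erase x, G.degree y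
      = ∑ y ∈ G.neighborFinset v, G.degree y :=
    Finset.add_sum_erase _ (fun y => G.degree y) hx
  have hlow : ((G.neighborFinset v).erase x).card • 1
      ≤ ∑ y ∈ (G.neighborFinset v).erase x, G.degree y :=
    Finset.card_nsmul_le_sum ((G.neighborFinset v).erase x) (fun y => G.degree y) 1
    (fun y _ => hdeg y)
  have hcard : ((G.neighborFinset v).erase x).card = G.degree v - 1 := by
    rw [Finset.card_erase_of_mem hx, G.card_neighborFinset_eq_degree]
  rw [hcard, smul_eq_mul, mul_one] at hlow
  have hsum := h v
  have hv1 := hdeg v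
  omega

end Aux

theorem G_two_zero_is_T2 {V : Type*} [Fintype V] [DecidableEq V] (G : SimpleGraph V)
    [DecidableRel G.Adj] (hconn : G.Connected)
    (hnonreg : ∃ v w : V, G.degree v ≠ G.degree w)
    (h : ∀ v : V, ∑ x ∈ G.neighborFinset v, G.degree x = 2 * G.degree v) :
    Fintype.card V = 7 ∧
    ∃ u : V, G.degree u = 3 ∧
      (∀ v : V, G.Adj u v → G.degree v = 2) ∧
      (∀ x : V, x ≠ u → ¬ G.Adj u x →
        G.degree x = 1 ∧ ∃ v : V, G.Adj u v ∧ G.Adj v x) := by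
  classical
  obtain ⟨v0, w0, hvw0⟩ := hnonreg
  have hne : v0 ≠ w0 := fun e => hvw0 (by rw [e])
  have hdeg : ∀ v : V, 1 ≤ G.degree v := fun v => aux_deg_pos hconn hne v
  have hadj : ∀ {v x : V}, G.Adj v x → G.degree x ≤ G.degree v + 1 :=
    fun hvx => aux_adj_deg hdeg h hvx
  obtain ⟨u, -, hu'⟩ := Finset.exists_max_image (Finset.univ : Finset V) (fun y => G.degree y)
    ⟨v0, Finset.mem_univ v0⟩
  have hu : ∀ a : V, G.degree a ≤ G.degree u := fun a => hu' a (Finset.mem_univ a)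
  -- max degree at most 3
  have hΔ3 : G.degree u ≤ 3 := by
    by_contra hgt
    push_neg at hgt
    have hlb : (G.neighborFinset u).card • (G.degree u - 1)
        ≤ ∑ x ∈ G.neighborFinset u, G.degree x :=
      Finset.card_nsmul_le_sum (G.neighborFinset u) (fun y => G.degree y) (G.degree u - 1)
      (fun x hx => by
        have hx' : G.Adj x u := ((G.mem_neighborFinset u x).mp hx).symm
        have := hadj hx'
        show G.degree u - 1 ≤ G.degree x
        omega)
    rw [G.card_neighborFinset_eq_degree, smul_eq_mul] at hlb
    have hsum := h u
    set d := G.degree u with hd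
    have h3 : 3 ≤ d - 1 := by omega
    have : d * 3 ≤ 2 * d := le_trans (Nat.mul_le_mul_left d h3) (hsum ▸ hlb)
    omega
  -- some vertex has degree < Δ
  have hz : ∃ z, G.degree z < G.degree u := by
    rcases lt_or_ge (G.degree v0) (G.degree u) with h1 | h1
    · exact ⟨v0, h1⟩
    · have hv0 : G.degree v0 = G.degree u := le_antisymm (hu v0) h1
      exact ⟨w0, by have := hu w0; omega⟩
  -- rule out max degree ≤ 2, so it is 3
  have hΔeq : G.degree u = 3 := by
    by_contra h3
    obtain ⟨z0, hz0⟩ := hz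
    have hΔ2 : G.degree u = 2 := by have := hdeg z0; omega
    have hz1 : G.degree z0 = 1 := by have := hdeg z0; omega
    have hcz : (G.neighborFinset z0).card = 1 := by
      rw [G.card_neighborFinset_eq_degree]; exact hz1
    obtain ⟨x, hx⟩ := Finset.card_eq_one.mp hcz
    have hzx : G.Adj z0 x := by
      rw [← G.mem_neighborFinset, hx]; exact Finset.mem_singleton_self x
    have hdx : G.degree x = 2 := by
      have hs := h z0
      rw [hx, Finset.sum_singleton, hz1] at hs
      omega
    have hzmem : z0 ∈ G.neighborFinset x := (G.mem_neighborFinset x z0).mpr hzx.symm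
    have hsplit : G.degree z0 + ∑ y ∈ (G.neighborFinset x).erase z0, G.degree y
        = ∑ y ∈ G.neighborFinset x, G.degree y :=
      Finset.add_sum_erase _ (fun y => G.degree y) hzmem
    have hcard : ((G.neighborFinset x).erase z0).card = 1 := by
      rw [Finset.card_erase_of_mem hzmem, G.card_neighborFinset_eq_degree, hdx]
    obtain ⟨w, hw⟩ := Finset.card_eq_one.mp hcard
    have hw3 : G.degree w = 3 := by
      have hs := h x
      rw [hw, Finset.sum_singleton, hz1] at hsplit
      rw [hdx] at hs
      omega
    have := hu w
    omega
  -- every neighbor of u has degree 2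
  have hge2 : ∀ y ∈ G.neighborFinset u, 2 ≤ G.degree y := by
    intro y hy
    have := hadj ((G.mem_neighborFinset u y).mp hy).symm
    omega
  have hnbr2 : ∀ x : V, G.Adj u x → G.degree x = 2 := by
    intro x hux
    have hxmem : x ∈ G.neighborFinset u := (G.mem_neighborFinset u x).mpr hux
    by_contra hne'
    have hx3 : 3 ≤ G.degree x := by have := hge2 x hxmem; omega
    have hsplit : G.degree x + ∑ y ∈ (G.neighborFinset u).erase x, G.degree y
        = ∑ y ∈ G.neighborFinset u, G.degree y :=
      Finset.add_sum_erase _ (fun y => G.degree y) hxmem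
    have hlow : ((G.neighborFinset u).erase x).card • 2
        ≤ ∑ y ∈ (G.neighborFinset u).erase x, G.degree y :=
      Finset.card_nsmul_le_sum ((G.neighborFinset u).erase x) (fun y => G.degree y) 2
      (fun y hy => hge2 y (Finset.mem_of_mem_erase hy))
    have hcard : ((G.neighborFinset u).erase x).card = 2 := by
      rw [Finset.card_erase_of_mem hxmem, G.card_neighborFinset_eq_degree, hΔeq]
    rw [hcard, smul_eq_mul] at hlow
    have hsum := h u
    rw [hΔeq] at hsum
    omega
  -- each neighbor x of u has a unique other neighbor, a pendant vertex
  have hleaf : ∀ x : V, G.Adj u x → ∃ w, (G.neighborFinset x).erase u = {w} ∧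
      G.degree w = 1 ∧ G.Adj x w ∧ w ≠ u ∧ ¬ G.Adj u w := by
    intro x hux
    have hdx := hnbr2 x hux
    have humem : u ∈ G.neighborFinset x := (G.mem_neighborFinset x u).mpr hux.symm
    have hcard : ((G.neighborFinset x).erase u).card = 1 := by
      rw [Finset.card_erase_of_mem humem, G.card_neighborFinset_eq_degree, hdx]
    obtain ⟨w, hw⟩ := Finset.card_eq_one.mp hcard
    have hwmem : w ∈ (G.neighborFinset x).erase u := hw ▸ Finset.mem_singleton_self w
    have hxw : G.Adj x w := (G.mem_neighborFinset x w).mp (Finset.mem_of_mem_erase hwmem)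
    have hwu : w ≠ u := Finset.ne_of_mem_erase hwmem
    have hdw : G.degree w = 1 := by
      have hsum := h x
      have hsplit : G.degree u + ∑ y ∈ (G.neighborFinset x).erase u, G.degree y
          = ∑ y ∈ G.neighborFinset x, G.degree y :=
        Finset.add_sum_erase _ (fun y => G.degree y) humem
      rw [hw, Finset.sum_singleton] at hsplit
      rw [hdx] at hsum
      rw [hΔeq] at hsplit
      omega
    have hnadj : ¬ G.Adj u w := fun hc => by have := hnbr2 w hc; omega
    exact ⟨w, hw, hdw, hxw, hwu, hnadj⟩
  -- a degree-one vertex has a unique neighbor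
  have huniq : ∀ w : V, G.degree w = 1 → ∀ a b : V, G.Adj w a → G.Adj w b → a = b := by
    intro w hdw a b ha hb
    have hc : (G.neighborFinset w).card = 1 := by
      rw [G.card_neighborFinset_eq_degree]; exact hdw
    obtain ⟨c, hcs⟩ := Finset.card_eq_one.mp hc
    have ha' : a ∈ ({c} : Finset V) := hcs ▸ (G.mem_neighborFinset w a).mpr ha
    have hb' : b ∈ ({c} : Finset V) := hcs ▸ (G.mem_neighborFinset w b).mpr hb
    rw [Finset.mem_singleton] at ha' hb'
    rw [ha', hb']
  -- classification of vertices
  have hclass : ∀ y : V, y = u ∨ G.Adj u y ∨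
      (G.degree y = 1 ∧ ∃ v, G.Adj u v ∧ G.Adj v y) := by
    have step : ∀ b y : V,
        (b = u ∨ G.Adj u b ∨ (G.degree b = 1 ∧ ∃ v, G.Adj u v ∧ G.Adj v b)) →
        G.Adj b y →
        (y = u ∨ G.Adj u y ∨ (G.degree y = 1 ∧ ∃ v, G.Adj u v ∧ G.Adj v y)) := by
      rintro b y (rfl | hub | ⟨hdb, v, huv, hvb⟩) hby
      · exact Or.inr (Or.inl hby)
      · obtain ⟨w, hw, hdw, hxw, hwu, hnadj⟩ := hleaf b hub
        by_cases hyu : y = u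
        · exact Or.inl hyu
        · have hym : y ∈ (G.neighborFinset b).erase u :=
            Finset.mem_erase.mpr ⟨hyu, (G.mem_neighborFinset b y).mpr hby⟩
          rw [hw, Finset.mem_singleton] at hym
          subst hym
          exact Or.inr (Or.inr ⟨hdw, b, hub, hxw⟩)
      · have hyv : y = v := huniq b hdb y v hby hvb.symm
        subst hyv
        exact Or.inr (Or.inl huv)
    have main : ∀ (y z : V) (q : G.Walk y z), z = u →
        (y = u ∨ G.Adj u y ∨ (G.degree y = 1 ∧ ∃ v, G.Adj u v ∧ G.Adj v y)) := by
      intro y z q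
      induction q with
      | nil => intro hz; exact Or.inl hz
      | cons hadj' q ih => intro hz; exact step _ _ (ih hz) hadj'.symm
    intro y
    obtain ⟨p⟩ := hconn y u
    exact main y u p rfl
  -- counting
  have key : ∀ x ∈ (insert u (G.neighborFinset u))ᶜ, G.degree x = 1 ∧
      ∃ v, G.Adj u v ∧ G.Adj v x := by
    intro x hx
    rw [Finset.mem_compl, Finset.mem_insert, not_or] at hx
    obtain ⟨hxu, hxn⟩ := hx
    rcases hclass x with rfl | hux | ⟨hd1, v, huv, hvx⟩
    · exact absurd rfl hxu
    · exact absurd ((G.mem_neighborFinset u x).mpr hux) hxn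
    · exact ⟨hd1, v, huv, hvx⟩
  have hxu_of_mem : ∀ x ∈ (insert u (G.neighborFinset u))ᶜ, x ≠ u := by
    intro x hx
    rw [Finset.mem_compl, Finset.mem_insert, not_or] at hx
    exact hx.1
  have hcard3 : ((insert u (G.neighborFinset u))ᶜ).card = (G.neighborFinset u).card := by
    apply Finset.card_bij (fun x hx => (key x hx).2.choose)
    · intro a ha
      exact (G.mem_neighborFinset u _).mpr (key a ha).2.choose_spec.1
    · intro a1 h1 a2 h2 heq
      have hv1 : G.Adj (key a1 h1).2.choose a1 := (key a1 h1).2.choose_spec.2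
      have hv2 : G.Adj (key a1 h1).2.choose a2 := by
        rw [heq]; exact (key a2 h2).2.choose_spec.2
      have huv : G.Adj u (key a1 h1).2.choose := (key a1 h1).2.choose_spec.1
      obtain ⟨w, hw, -, -, -, -⟩ := hleaf _ huv
      have m1 : a1 ∈ (G.neighborFinset (key a1 h1).2.choose).erase u :=
        Finset.mem_erase.mpr ⟨hxu_of_mem a1 h1, (G.mem_neighborFinset _ _).mpr hv1⟩
      have m2 : a2 ∈ (G.neighborFinset (key a1 h1).2.choose).erase u :=
        Finset.mem_erase.mpr ⟨hxu_of_mem a2 h2, (G.mem_neighborFinset _ _).mpr hv2⟩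
      rw [hw, Finset.mem_singleton] at m1 m2
      rw [m1, m2]
    · intro v hv
      have huv : G.Adj u v := (G.mem_neighborFinset u v).mp hv
      obtain ⟨w, hw, hdw, hvw, hwu, hnadj⟩ := hleaf v huv
      have hwmem : w ∈ (insert u (G.neighborFinset u))ᶜ := by
        rw [Finset.mem_compl, Finset.mem_insert, not_or]
        exact ⟨hwu, fun hc => hnadj ((G.mem_neighborFinset u w).mp hc)⟩
      refine ⟨w, hwmem, ?_⟩
      exact huniq w hdw _ _ (key w hwmem).2.choose_spec.2.symm hvw.symm
  have hcardV : Fintype.card V = 7 := by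
    have hcc := Finset.card_add_card_compl (insert u (G.neighborFinset u))
    have h4 : (insert u (G.neighborFinset u)).card = 4 := by
      rw [Finset.card_insert_of_notMem (G.notMem_neighborFinset_self u),
        G.card_neighborFinset_eq_degree, hΔeq]
    have h3 : (G.neighborFinset u).card = 3 := by
      rw [G.card_neighborFinset_eq_degree, hΔeq]
    omega
  refine ⟨hcardV, u, hΔeq, fun v hv => hnbr2 v hv, ?_⟩
  intro x hxu hnadj
  have hxmem : x ∈ (insert u (G.neighborFinset u))ᶜ := by
    rw [Finset.mem_compl, Finset.mem_insert, not_or]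
    exact ⟨hxu, fun hc => hnadj ((G.mem_neighborFinset u x).mp hc)⟩
  exact key x hxmem
end
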